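/- Let G be a finite connected simple graph, r ∈ ℕ, D a distance-r dominating set of G, and id : V(G) → ℕ injective. Contracting each class B(v) of the D-partition to a single vertex yields a connected depth-r minor of G; concretely: the sets B(v) (v ∈ D) are nonempty, pairwise disjoint, cover V(G), each induces a connected subgraph of G of radius at most r, and the graph H on vertex set D in which distinct u,v ∈ D are adjacent if and only if some edge of G joins a vertex of B(u) to a vertex of B(v) is connected. -/

import Mathlib

/-
Compare paths by the key (length, id-sequence) in ℕ ×ₗ List ℕ; walking around
a cycle only makes a walk longer, so `P v w` is key-minimal among all walks from `v` to `w`,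
and key-comparison is compatible with appending a common suffix. Hence, if `w ∈ B(v)` and
some `u ≠ v` beat `v` at a vertex `x` of `P(v,w)`, then `P(u,x)` followed by the rest of
`P(v,w)` would beat `P(v,w)` at `w`; so every class contains the paths from its centre,
which makes it connected, of radius at most `r` (via a dominating vertex), and makes the
quotient of a walk of `G` a walk of `H`. The first vertex of a path is read off its key, so
distinct centres never tie and the classes are disjoint.
-/

/-- `u` is weakly `s`-reachable from `v` w.r.t. the linear order on `V`:
there is a path of length at most `s` between `u` and `v` on which `u` is minimum. -/
def wreach {V : Type*} [LinearOrder V] (G : SimpleGraph V) (s : ℕ) (v : V) : Set V :=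
  {u | ∃ p : G.Walk u v, p.IsPath ∧ p.length ≤ s ∧ ∀ x ∈ p.support, u ≤ x}

/-- The closed `r`-neighborhood `N_r[v]`. -/
def ball {V : Type*} (G : SimpleGraph V) (r : ℕ) (v : V) : Set V :=
  {u | ∃ p : G.Walk v u, p.length ≤ r}

/-- `D` is a distance-`r` dominating set. -/
def isRDom {V : Type*} (G : SimpleGraph V) (r : ℕ) (D : Set V) : Prop :=
  ∀ w : V, ∃ v ∈ D, w ∈ ball G r v

/-- The lexicographic order on paths with respect to an injection `idf : V → ℕ`:
a shorter path is smaller; paths of equal length are compared by the lexicographic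
order of the `idf`-sequences of their vertices. -/
def walkLE {V : Type*} (idf : V → ℕ) {G : SimpleGraph V} {a b c d : V}
    (p : G.Walk a b) (q : G.Walk c d) : Prop :=
  p.length < q.length ∨ (p.length = q.length ∧ p.support.map idf ≤ q.support.map idf)

/-- The class of `v` in the `D`-partition, with respect to a choice `P` of
lexicographically least paths: `B(v) = {w : P(v,w) ≤_lex P(u,w) for all u ∈ D, u ≠ v}`. -/
def Bpart {V : Type*} {G : SimpleGraph V} (idf : V → ℕ) (D : Set V)
    (P : ∀ v w : V, G.Walk v w) (v : V) : Set V :=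
  {w | ∀ u ∈ D, u ≠ v → walkLE idf (P v w) (P u w)}

open SimpleGraph

theorem List.Lex.append_right_of_length_eq {α : Type*} {r : α → α → Prop} {l₁ l₂ : List α}
    (h : List.Lex r l₁ l₂) (hl : l₁.length = l₂.length) (t : List α) :
    List.Lex r (l₁ ++ t) (l₂ ++ t) := by
  induction h with
  | nil => simp at hl
  | cons _ ih => exact List.Lex.cons (ih (by simpa using hl))
  | rel h => exact List.Lex.rel h

theorem SimpleGraph.Reachable.map_of_adj {V W : Type*} {G : SimpleGraph V} {H : SimpleGraph W}
    (f : V → W) (hf : ∀ a b, G.Adj a b → H.Reachable (f a) (f b)) {a b : V}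
    (h : G.Reachable a b) : H.Reachable (f a) (f b) := by
  rw [reachable_iff_reflTransGen] at h ⊢
  exact Relation.ReflTransGen.lift' f
    (fun x y hxy => (reachable_iff_reflTransGen _ _).1 (hf x y hxy)) a b h

section WalkKey

variable {V : Type*} (idf : V → ℕ) {G : SimpleGraph V}

noncomputable def walkKey {a b : V} (p : G.Walk a b) : ℕ ×ₗ List ℕ :=
  toLex (p.length, p.support.map idf)

variable {idf}

theorem walkLE_iff_walkKey_le {a b c d : V} {p : G.Walk a b} {q : G.Walk c d} :
    walkLE idf p q ↔ walkKey idf p ≤ walkKey idf q := by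
  rw [walkKey, walkKey, Prod.Lex.le_iff]; rfl

theorem walkKey_lt_iff {a b c d : V} {p : G.Walk a b} {q : G.Walk c d} :
    walkKey idf p < walkKey idf q ↔
      p.length < q.length ∨ (p.length = q.length ∧ p.support.map idf < q.support.map idf) := by
  rw [walkKey, walkKey, Prod.Lex.lt_iff]; rfl

theorem length_le_of_walkKey_le {a b c d : V} {p : G.Walk a b} {q : G.Walk c d}
    (h : walkKey idf p ≤ walkKey idf q) : p.length ≤ q.length :=
  (Prod.Lex.monotone_fst _ _ h :)

theorem walkKey_append_lt_append {u v x w : V} {p : G.Walk u x} {q : G.Walk v x}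
    (h : walkKey idf p < walkKey idf q) (s : G.Walk x w) :
    walkKey idf (p.append s) < walkKey idf (q.append s) := by
  rw [walkKey_lt_iff] at h ⊢
  simp only [Walk.length_append, Walk.support_append, List.map_append]
  rcases h with hlen | ⟨hlen, hlex⟩
  · exact Or.inl (by omega)
  · refine Or.inr ⟨by omega, List.Lex.append_right_of_length_eq hlex ?_ _⟩
    simp [hlen]

theorem walkKey_bypass_le [DecidableEq V] {a b : V} (p : G.Walk a b) :
    walkKey idf p.bypass ≤ walkKey idf p := by
  rcases p.length_bypass_le_length.lt_or_eq with hlt | heq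
  · exact (walkKey_lt_iff.2 (Or.inl hlt)).le
  · rw [p.bypass_eq_self_of_length_le_length_bypass heq.ge]

theorem eq_of_walkKey_eq (hinj : Function.Injective idf) {a b c d : V}
    {p : G.Walk a c} {q : G.Walk b d} (h : walkKey idf p = walkKey idf q) : a = b := by
  have hsupp : p.support.map idf = q.support.map idf := congrArg (fun k => (ofLex k).2) h
  rw [← p.cons_tail_support, ← q.cons_tail_support, List.map_cons, List.map_cons] at hsupp
  exact hinj (List.cons.inj hsupp).1

end WalkKey

def IsLexLeastPaths {V : Type*} {G : SimpleGraph V} (idf : V → ℕ) (P : ∀ v w : V, G.Walk v w) :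
    Prop :=
  ∀ v w : V, (P v w).IsPath ∧ ∀ q : G.Walk v w, q.IsPath → walkLE idf (P v w) q

namespace IsLexLeastPaths

variable {V : Type*} {G : SimpleGraph V} {r : ℕ} {D : Set V} {idf : V → ℕ}
  {P : ∀ v w : V, G.Walk v w}

theorem walkKey_le (hP : IsLexLeastPaths idf P) {v w : V} (q : G.Walk v w) :
    walkKey idf (P v w) ≤ walkKey idf q := by
  classical
  exact (walkLE_iff_walkKey_le.1 ((hP v w).2 _ q.bypass_isPath)).trans (walkKey_bypass_le q)

theorem mem_Bpart_iff {v w : V} :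
    w ∈ Bpart idf D P v ↔ ∀ u ∈ D, u ≠ v → walkKey idf (P v w) ≤ walkKey idf (P u w) :=
  forall₂_congr fun _ _ => imp_congr_right fun _ => walkLE_iff_walkKey_le

theorem self_mem_Bpart (hP : IsLexLeastPaths idf P) (v : V) : v ∈ Bpart idf D P v := by
  intro u _ huv
  have hvv : (P v v).length = 0 := by
    simpa using length_le_of_walkKey_le (hP.walkKey_le (Walk.nil : G.Walk v v))
  exact Or.inl (hvv ▸ Nat.pos_of_ne_zero fun h => huv (Walk.eq_of_length_eq_zero h))

theorem eq_of_mem_Bpart (hinj : Function.Injective idf) {u v w : V} (hu : u ∈ D) (hv : v ∈ D)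
    (hwu : w ∈ Bpart idf D P u) (hwv : w ∈ Bpart idf D P v) : u = v := by
  by_contra huv
  exact huv (eq_of_walkKey_eq hinj
    ((mem_Bpart_iff.1 hwu v hv (Ne.symm huv)).antisymm (mem_Bpart_iff.1 hwv u hu huv)))

theorem exists_mem_Bpart [Finite V] (hD : D.Nonempty) (w : V) : ∃ v ∈ D, w ∈ Bpart idf D P v := by
  obtain ⟨v, hv, hmin⟩ := Set.exists_min_image D (fun u => walkKey idf (P u w)) D.toFinite hD
  exact ⟨v, hv, mem_Bpart_iff.2 fun u hu _ => hmin u hu⟩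

theorem mem_Bpart_of_mem_support [DecidableEq V] (hP : IsLexLeastPaths idf P) {v w x : V}
    (hw : w ∈ Bpart idf D P v) (hx : x ∈ (P v w).support) : x ∈ Bpart idf D P v := by
  refine mem_Bpart_iff.2 fun u hu huv => ?_
  by_contra! hux
  have hshortcut : walkKey idf ((P u x).append ((P v w).dropUntil x hx)) < walkKey idf (P v w) := by
    conv_rhs => rw [← (P v w).take_spec hx]
    exact walkKey_append_lt_append (hux.trans_le (hP.walkKey_le _)) _
  exact (hP.walkKey_le _ |>.trans_lt hshortcut).not_ge (mem_Bpart_iff.1 hw u hu huv)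

theorem length_le_of_mem_Bpart (hP : IsLexLeastPaths idf P) (hD : isRDom G r D) {v w : V}
    (hw : w ∈ Bpart idf D P v) : (P v w).length ≤ r := by
  obtain ⟨u, hu, q, hq⟩ := hD w
  have hu_le : (P u w).length ≤ r := (length_le_of_walkKey_le (hP.walkKey_le q)).trans hq
  rcases eq_or_ne u v with rfl | huv
  · exact hu_le
  · exact (length_le_of_walkKey_le (mem_Bpart_iff.1 hw u hu huv)).trans hu_le

theorem induce_Bpart_connected (hP : IsLexLeastPaths idf P) (v : V) :
    (G.induce (Bpart idf D P v)).Connected := by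
  classical
  refine induce_connected_of_patches v (hP.self_mem_Bpart v) fun {w} hw => ?_
  refine ⟨{x | x ∈ (P v w).support}, fun x hx => hP.mem_Bpart_of_mem_support hw hx,
    (P v w).start_mem_support, (P v w).end_mem_support, ?_⟩
  exact (P v w).connected_induce_support.preconnected _ _


theorem connected_fromRel_Bpart [Finite V] (hG : G.Connected) (hinj : Function.Injective idf)
    (hP : IsLexLeastPaths idf P) (hD : D.Nonempty) :
    (SimpleGraph.fromRel (fun u v : D =>
        ∃ a ∈ Bpart idf D P u.1, ∃ b ∈ Bpart idf D P v.1, G.Adj a b)).Connected := by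
  set H : SimpleGraph D := SimpleGraph.fromRel fun u v : D =>
    ∃ a ∈ Bpart idf D P u.1, ∃ b ∈ Bpart idf D P v.1, G.Adj a b
  choose c hcD hc using exists_mem_Bpart (idf := idf) (P := P) hD
  let f : V → D := fun w => ⟨c w, hcD w⟩
  have hf_self (d : D) : f d = d :=
    Subtype.ext (eq_of_mem_Bpart hinj (hcD d) d.2 (hc d) (hP.self_mem_Bpart d))
  have hf_adj (a b : V) (hab : G.Adj a b) : H.Reachable (f a) (f b) := by
    by_cases hfab : f a = f b
    · exact hfab ▸ Reachable.refl (f a)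
    · exact Adj.reachable ((fromRel_adj ..).2 ⟨hfab, Or.inl ⟨a, hc a, b, hc b, hab⟩⟩)
  have : Nonempty D := hD.to_subtype
  refine (connected_iff _).2 ⟨fun d e => ?_, inferInstance⟩
  simpa only [hf_self] using (hG.preconnected d e).map_of_adj f hf_adj

end IsLexLeastPaths

/-- contracting the classes `B(v)` (`v ∈ D`) of the `D`-partition yields a
connected depth-`r` minor of `G`: the classes are nonempty, pairwise disjoint, cover
`V(G)`, each induces a connected subgraph of radius at most `r` (with center `v`), and
the graph `H` on `D` in which distinct `u,v` are adjacent iff some edge of `G` joins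
`B(u)` to `B(v)` is connected. -/
theorem stmt11 {V : Type*} [Fintype V] (G : SimpleGraph V) (hG : G.Connected) (r : ℕ)
    (D : Set V) (hD : isRDom G r D)
    (idf : V → ℕ) (hinj : Function.Injective idf)
    (P : ∀ v w : V, G.Walk v w)
    (hP : ∀ v w : V, (P v w).IsPath ∧ ∀ q : G.Walk v w, q.IsPath → walkLE idf (P v w) q) :
    (∀ v ∈ D, (Bpart idf D P v).Nonempty) ∧
    (∀ v ∈ D, ∀ u ∈ D, v ≠ u → Disjoint (Bpart idf D P v) (Bpart idf D P u)) ∧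
    (∀ w : V, ∃ v ∈ D, w ∈ Bpart idf D P v) ∧
    (∀ v ∈ D, (G.induce (Bpart idf D P v)).Connected) ∧
    (∀ v ∈ D, ∀ w ∈ Bpart idf D P v,
      ∃ p : G.Walk v w, p.length ≤ r ∧ ∀ x ∈ p.support, x ∈ Bpart idf D P v) ∧
    (SimpleGraph.fromRel (fun u v : D =>
        ∃ a ∈ Bpart idf D P u.1, ∃ b ∈ Bpart idf D P v.1, G.Adj a b)).Connected := by
  classical
  replace hP : IsLexLeastPaths idf P := hP
  have hDne : D.Nonempty := by
    obtain ⟨v, hv, -⟩ := hD hG.nonempty.some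
    exact ⟨v, hv⟩
  refine ⟨fun v _ => ⟨v, hP.self_mem_Bpart v⟩, ?_, IsLexLeastPaths.exists_mem_Bpart hDne,
    fun v _ => hP.induce_Bpart_connected v, ?_, hP.connected_fromRel_Bpart hG hinj hDne⟩
  · exact fun v hv u hu huv => Set.disjoint_left.2 fun w hwv hwu =>
      huv (IsLexLeastPaths.eq_of_mem_Bpart hinj hv hu hwv hwu)
  · exact fun v _ w hw => ⟨P v w, hP.length_le_of_mem_Bpart hD hw,
      fun x hx => hP.mem_Bpart_of_mem_support hw hx⟩
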